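/- The L^0-extension of an L^∞-normed module is unique up to isometric L^0-module isomorphism: if (E_0, ‖·‖_0) with T : E → E_0 and (S, ‖·‖_S) with R : E → S are both complete random normed modules with L^∞-module homomorphisms preserving the norm (‖Tx‖_0 = ‖x‖ = ‖Rx‖_S for all x) and having dense images, then there exists an L^0-module isomorphism U : E_0 → S with ‖Ux‖_S = ‖x‖_0 for all x ∈ E_0. -/

import Mathlib

open MeasureTheory Filter
noncomputable section

variable {Ω : Type} [MeasurableSpace Ω] {μ : Measure Ω}

/-- `L⁰(𝓕)`: equivalence classes of random variables, as a commutative ring. -/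
instance : NatCast (Ω →ₘ[μ] ℝ) := ⟨fun n => AEEqFun.const Ω (n : ℝ)⟩
instance : IntCast (Ω →ₘ[μ] ℝ) := ⟨fun n => AEEqFun.const Ω (n : ℝ)⟩
instance : CommRing (Ω →ₘ[μ] ℝ) :=
  AEEqFun.toGerm_injective.commRing AEEqFun.toGerm AEEqFun.zero_toGerm AEEqFun.one_toGerm
    AEEqFun.add_toGerm AEEqFun.mul_toGerm AEEqFun.neg_toGerm AEEqFun.sub_toGerm
    (fun _ _ => AEEqFun.smul_toGerm _ _) (fun _ _ => AEEqFun.smul_toGerm _ _)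
    AEEqFun.pow_toGerm (fun _ => rfl) (fun _ => rfl)

/-- `L^∞(𝓕)`: the subring of essentially bounded random variables. -/
def Linf (μ : Measure Ω) : Subring (Ω →ₘ[μ] ℝ) where
  carrier := {ξ | ∃ c : ℝ, ∀ᵐ ω ∂μ, |ξ ω| ≤ c}
  zero_mem' := ⟨0, by filter_upwards [AEEqFun.coeFn_zero (β := ℝ) (μ := μ)] with ω h; simp [h]⟩
  one_mem' := ⟨1, by filter_upwards [AEEqFun.coeFn_one (β := ℝ) (μ := μ)] with ω h; simp [h]⟩
  add_mem' := by
    rintro a b ⟨c, hc⟩ ⟨d, hd⟩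
    exact ⟨c + d, by
      filter_upwards [AEEqFun.coeFn_add a b, hc, hd] with ω h1 h2 h3
      calc |(a + b) ω| = |a ω + b ω| := by rw [h1]; rfl
        _ ≤ |a ω| + |b ω| := abs_add_le _ _
        _ ≤ c + d := add_le_add h2 h3⟩
  mul_mem' := by
    rintro a b ⟨c, hc⟩ ⟨d, hd⟩
    exact ⟨|c| * |d|, by
      filter_upwards [AEEqFun.coeFn_mul a b, hc, hd] with ω h1 h2 h3
      calc |(a * b) ω| = |a ω * b ω| := by rw [h1]; rfl
        _ = |a ω| * |b ω| := abs_mul _ _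
        _ ≤ |c| * |d| :=
            mul_le_mul (h2.trans (le_abs_self c)) (h3.trans (le_abs_self d))
              (abs_nonneg _) (abs_nonneg _)⟩
  neg_mem' := by
    rintro a ⟨c, hc⟩
    exact ⟨c, by
      filter_upwards [AEEqFun.coeFn_neg a, hc] with ω h1 h2
      calc |(-a) ω| = |-(a ω)| := by rw [h1]; rfl
        _ = |a ω| := abs_neg _
        _ ≤ c := h2⟩

/-- the constant `c`, as an element of `L^∞`. -/
def LinfConst (μ : Measure Ω) (c : ℝ) : Linf μ :=
  ⟨AEEqFun.const Ω c, |c|, by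
    filter_upwards [AEEqFun.coeFn_const (α := Ω) (μ := μ) c] with ω h
    simp [h, Function.const]⟩

/-- the equivalence class `Ĩ_A` of the indicator function of a set `A`. -/
def indL0 (μ : Measure Ω) (A : Set Ω) (hA : MeasurableSet A) : Ω →ₘ[μ] ℝ :=
  AEEqFun.mk (A.indicator (1 : Ω → ℝ)) ((measurable_const.indicator hA).aestronglyMeasurable)

/-- a countable measurable partition of `Ω`. -/
structure MPartition (Ω : Type) [MeasurableSpace Ω] where
  A : ℕ → Set Ω
  meas : ∀ k, MeasurableSet (A k)
  disj : ∀ m k, m ≠ k → A m ∩ A k = ∅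
  cover : (⋃ k, A k) = Set.univ

/-- `Ĩ_{A_k}` for a member of a countable measurable partition. -/
def MPartition.ind (P : MPartition Ω) (μ : Measure Ω) (k : ℕ) : Ω →ₘ[μ] ℝ :=
  indL0 μ (P.A k) (P.meas k)

/-- `‖·‖` is an `L⁰`-norm making the `L⁰`-module `S` a random normed module. -/
structure IsRNNorm (μ : Measure Ω) {S : Type} [AddCommGroup S]
    [Module (Ω →ₘ[μ] ℝ) S] (n : S → Ω →ₘ[μ] ℝ) : Prop where
  nonneg : ∀ x, 0 ≤ n x
  eq_zero_iff : ∀ x, n x = 0 ↔ x = 0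
  norm_smul : ∀ (ξ : Ω →ₘ[μ] ℝ) (x : S), n (ξ • x) = |ξ| * n x
  norm_add_le : ∀ x y, n (x + y) ≤ n x + n y

/-- `‖·‖` is an `L^∞`-norm making the `L^∞`-module `E` an `L^∞`-normed module. -/
structure IsLinfNorm (μ : Measure Ω) {E : Type} [AddCommGroup E]
    [Module (Linf μ) E] (n : E → Ω →ₘ[μ] ℝ) : Prop where
  nonneg : ∀ x, 0 ≤ n x
  mem_Linf : ∀ x, n x ∈ Linf μ
  eq_zero_iff : ∀ x, n x = 0 ↔ x = 0
  norm_smul : ∀ (ξ : Linf μ) (x : E), n (ξ • x) = |(ξ : Ω →ₘ[μ] ℝ)| * n x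
  norm_add_le : ∀ x y, n (x + y) ≤ n x + n y

/-- the metric `d(x,y) = E[1 ∧ ‖x-y‖]` associated to an `L⁰`- (or `L^∞`-) norm. -/
def ndist {S : Type} [AddCommGroup S] (μ : Measure Ω) (n : S → Ω →ₘ[μ] ℝ) (x y : S) : ℝ :=
  ∫ ω, min 1 |n (x - y) ω| ∂μ

/-- the distance of convergence in probability on `L⁰`. -/
def dProb (μ : Measure Ω) (ξ η : Ω →ₘ[μ] ℝ) : ℝ := ∫ ω, min 1 |ξ ω - η ω| ∂μ

/-- Cauchy property of a sequence with respect to a distance function. -/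
def dCauchy {S : Type} (d : S → S → ℝ) (x : ℕ → S) : Prop :=
  ∀ ε > (0:ℝ), ∃ N : ℕ, ∀ m ≥ N, ∀ k ≥ N, d (x m) (x k) < ε

/-- convergence of a sequence with respect to a distance function. -/
def dTendsto {S : Type} (d : S → S → ℝ) (x : ℕ → S) (y : S) : Prop :=
  Tendsto (fun k => d (x k) y) atTop (nhds 0)

/-- completeness with respect to a distance function. -/
def dComplete {S : Type} (d : S → S → ℝ) : Prop :=
  ∀ x : ℕ → S, dCauchy d x → ∃ y, dTendsto d x y

/-- a bundled complete-or-not random normed module over `L⁰(𝓕)`. -/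
structure RNMod (Ω : Type) [MeasurableSpace Ω] (μ : Measure Ω) where
  carrier : Type
  acg : AddCommGroup carrier
  mod : @Module (Ω →ₘ[μ] ℝ) carrier _ acg.toAddCommMonoid
  rnorm : carrier → Ω →ₘ[μ] ℝ
  isRNNorm : IsRNNorm μ rnorm

attribute [instance] RNMod.acg RNMod.mod

/-- the metric of the `(ε,λ)`-topology of a random normed module. -/
def RNMod.dist (S : RNMod Ω μ) : S.carrier → S.carrier → ℝ := ndist μ S.rnorm

/-- completeness of a random normed module in the `(ε,λ)`-topology. -/
def RNMod.Complete (S : RNMod Ω μ) : Prop := dComplete S.dist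

/-- the essential supremum `‖ξ‖_∞` of (the absolute value of) a random variable. -/
def NinfV (μ : Measure Ω) (ξ : Ω →ₘ[μ] ℝ) : ℝ := essSup (fun ω => |ξ ω|) μ

/-- `T` is an `L^∞`-module homomorphism from `E` into (the `L^∞`-module underlying) `S`. -/
def IsLinfModHom (μ : Measure Ω) {E S : Type} [AddCommGroup E] [Module (Linf μ) E]
    [AddCommGroup S] [Module (Ω →ₘ[μ] ℝ) S] (T : E → S) : Prop :=
  (∀ x y, T (x + y) = T x + T y) ∧
  (∀ (ξ : Linf μ) (x : E), T (ξ • x) = ((ξ : Ω →ₘ[μ] ℝ)) • T x)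

/-- `S` together with `T` is an `L⁰`-extension of the `L^∞`-normed module `(E, n)`:
`S` is a complete random normed module, `T` is a norm-preserving `L^∞`-module
homomorphism with dense range. -/
def IsL0Extension (μ : Measure Ω) {E : Type} [AddCommGroup E] [Module (Linf μ) E]
    (n : E → Ω →ₘ[μ] ℝ) (S : RNMod Ω μ) (T : E → S.carrier) : Prop :=
  S.Complete ∧ IsLinfModHom μ T ∧ (∀ x, S.rnorm (T x) = n x) ∧
  (∀ y : S.carrier, ∀ ε > (0:ℝ), ∃ x : E, S.dist (T x) y < ε)

/-- the set of elements of an `L⁰`-normed module with essentially bounded norm. -/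
def LinfPart (μ : Measure Ω) {S : Type} (n : S → Ω →ₘ[μ] ℝ) : Set S := {x | n x ∈ Linf μ}

/-- convergence in probability of a sequence of random variables. -/
def TendstoInProb (μ : Measure Ω) (ξ : ℕ → Ω →ₘ[μ] ℝ) (l : Ω →ₘ[μ] ℝ) : Prop :=
  Tendsto (fun k => dProb μ (ξ k) l) atTop (nhds 0)

/-- the countable concatenation hull `H⁰_cc(E)` of a subset `E` of a random normed module. -/
def Hcc (S : RNMod Ω μ) (E : Set S.carrier) : Set S.carrier :=
  {z | ∃ (x : ℕ → S.carrier) (P : MPartition Ω),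
    (∀ k, x k ∈ E) ∧ ∀ k, P.ind μ k • z = P.ind μ k • x k}

/-- `L(E) = L⁰ * E`, the set of `L⁰`-multiples of elements of `E`. -/
def Lgen (S : RNMod Ω μ) (E : Set S.carrier) : Set S.carrier :=
  {z | ∃ (ξ : Ω →ₘ[μ] ℝ) (x : S.carrier), x ∈ E ∧ z = ξ • x}

/-- `f` is a continuous `L^∞`-module homomorphism from `(E, n)` to `L^∞`, i.e. a member of
the dual `L^∞`-normed module `E′`. -/
def IsLinfDual (μ : Measure Ω) {E : Type} [AddCommGroup E] [Module (Linf μ) E]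
    (n : E → Ω →ₘ[μ] ℝ) (f : E → Ω →ₘ[μ] ℝ) : Prop :=
  (∀ x, f x ∈ Linf μ) ∧ (∀ x y, f (x + y) = f x + f y) ∧
  (∀ (ξ : Linf μ) (x : E), f (ξ • x) = (ξ : Ω →ₘ[μ] ℝ) * f x) ∧
  (∀ ε > (0:ℝ), ∃ δ > (0:ℝ), ∀ x, NinfV μ (n x) < δ → NinfV μ (f x) < ε)

/-- `g` is a continuous `L⁰`-module homomorphism from `S` to `L⁰`, i.e. a member of the
random conjugate space `S^*`. -/
def IsRNDual (μ : Measure Ω) (S : RNMod Ω μ) (g : S.carrier → Ω →ₘ[μ] ℝ) : Prop :=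
  (∀ x y, g (x + y) = g x + g y) ∧ (∀ (ξ : Ω →ₘ[μ] ℝ) x, g (ξ • x) = ξ * g x) ∧
  (∀ ε > (0:ℝ), ∃ δ > (0:ℝ), ∀ x, ndist μ S.rnorm x 0 < δ → dProb μ (g x) 0 < ε)

/-- the set `{|f(x)| : ‖x‖ ≤ 1}` whose supremum in the lattice `L⁰` is the dual norm `‖f‖′`. -/
def dualBall {X : Type} (n : X → Ω →ₘ[μ] ℝ) (f : X → Ω →ₘ[μ] ℝ) : Set (Ω →ₘ[μ] ℝ) :=
  {t | ∃ x, n x ≤ 1 ∧ t = |f x|}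

/-!
Both `S₁` and `S₂` are completions of `E` for the pseudometric `E[1 ∧ n(a - b)]`, so the
comparison map of abstract completions is a uniform isomorphism `U` with `U ∘ T₁ = T₂`.
Addition, multiplication by a bounded `ξ` and the `L⁰`-norm are continuous for the
`(ε,λ)`-topology, and `U` respects them on the dense image of `E`, hence everywhere. A general
`ξ ∈ L⁰` is reached through its truncations `ξₖ`, since `ξₖ • z → ξ • z` by dominated convergence.
-/

open Topology

lemma min_one_add_le_min_one_add_min_one {s t : ℝ} (hs : 0 ≤ s) (ht : 0 ≤ t) :
    min 1 (s + t) ≤ min 1 s + min 1 t := by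
  grind

lemma min_one_mul_le_max_one_mul_min_one (c : ℝ) {t : ℝ} (ht : 0 ≤ t) :
    min 1 (c * t) ≤ max 1 c * min 1 t := by
  rcases le_total 1 t with h | h
  · rw [min_eq_left h, mul_one]
    exact (min_le_left _ _).trans (le_max_left _ _)
  · rw [min_eq_right h]
    exact (min_le_right _ _).trans (mul_le_mul_of_nonneg_right (le_max_right _ _) ht)

section ProbNorm

variable [IsFiniteMeasure μ]

lemma integrable_min_one_abs (ξ : Ω →ₘ[μ] ℝ) : Integrable (fun ω => min 1 |ξ ω|) μ :=
  (integrable_const (1 : ℝ)).mono'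
    ((continuous_const.min continuous_abs).comp_aestronglyMeasurable ξ.aestronglyMeasurable)
    (ae_of_all _ fun ω => by simp [abs_of_nonneg (le_min zero_le_one (abs_nonneg (ξ ω)))])

/-- The F-norm `E[1 ∧ |ξ|]` of convergence in probability on `L⁰`. -/
def probNorm (μ : Measure Ω) [IsFiniteMeasure μ] : AddGroupNorm (Ω →ₘ[μ] ℝ) where
  toFun ξ := ∫ ω, min 1 |ξ ω| ∂μ
  map_zero' := by
    rw [← integral_zero Ω ℝ (μ := μ)]
    refine integral_congr_ae ?_
    filter_upwards [AEEqFun.coeFn_zero (β := ℝ) (μ := μ)] with ω hω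
    simp [hω]
  add_le' ξ η := by
    rw [← integral_add (integrable_min_one_abs ξ) (integrable_min_one_abs η)]
    refine integral_mono_ae (integrable_min_one_abs _)
      ((integrable_min_one_abs ξ).add (integrable_min_one_abs η)) ?_
    filter_upwards [AEEqFun.coeFn_add ξ η] with ω hω
    calc min 1 |(ξ + η) ω| ≤ min 1 (|ξ ω| + |η ω|) := by
          rw [hω]; exact min_le_min le_rfl (abs_add_le _ _)
      _ ≤ _ := min_one_add_le_min_one_add_min_one (abs_nonneg _) (abs_nonneg _)
  neg' ξ := by
    refine integral_congr_ae ?_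
    filter_upwards [AEEqFun.coeFn_neg ξ] with ω hω
    simp [hω]
  eq_zero_of_map_eq_zero' ξ h := by
    have h0 := (integral_eq_zero_iff_of_nonneg (fun ω => le_min zero_le_one (abs_nonneg _))
      (integrable_min_one_abs ξ)).1 h
    refine AEEqFun.ext ?_
    filter_upwards [h0, AEEqFun.coeFn_zero (β := ℝ) (μ := μ)] with ω hω h0ω
    rw [h0ω, Pi.zero_apply, ← abs_eq_zero]
    exact ((min_eq_iff.1 hω).resolve_left fun h => one_ne_zero h.1).1

instance : NormedAddCommGroup (Ω →ₘ[μ] ℝ) := (probNorm μ).toNormedAddCommGroup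

lemma norm_eq_probNorm (ξ : Ω →ₘ[μ] ℝ) : ‖ξ‖ = probNorm μ ξ := rfl

lemma probNorm_apply (ξ : Ω →ₘ[μ] ℝ) : probNorm μ ξ = ∫ ω, min 1 |ξ ω| ∂μ := rfl

lemma probNorm_le_of_ae_abs_le {ξ η : Ω →ₘ[μ] ℝ} (h : ∀ᵐ ω ∂μ, |ξ ω| ≤ |η ω|) :
    probNorm μ ξ ≤ probNorm μ η :=
  integral_mono_ae (integrable_min_one_abs ξ) (integrable_min_one_abs η)
    (h.mono fun _ hω => min_le_min le_rfl hω)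

lemma probNorm_le_of_nonneg_of_le {ξ η : Ω →ₘ[μ] ℝ} (h0 : 0 ≤ ξ) (h : ξ ≤ η) :
    probNorm μ ξ ≤ probNorm μ η := by
  refine probNorm_le_of_ae_abs_le ?_
  filter_upwards [AEEqFun.coeFn_le.2 h0, AEEqFun.coeFn_le.2 h,
    AEEqFun.coeFn_zero (β := ℝ) (μ := μ)] with ω h0ω hω hzero
  rw [hzero] at h0ω
  rw [abs_of_nonneg h0ω, abs_of_nonneg (h0ω.trans hω)]
  exact hω

lemma probNorm_le_max_one_mul {ξ η : Ω →ₘ[μ] ℝ} {c : ℝ} (h : ∀ᵐ ω ∂μ, |ξ ω| ≤ c * |η ω|) :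
    probNorm μ ξ ≤ max 1 c * probNorm μ η := by
  rw [probNorm_apply, probNorm_apply, ← integral_const_mul]
  refine integral_mono_ae (integrable_min_one_abs ξ) ((integrable_min_one_abs η).const_mul _) ?_
  filter_upwards [h] with ω hω
  calc min 1 |ξ ω| ≤ min 1 (c * |η ω|) := min_le_min le_rfl hω
    _ ≤ max 1 c * min 1 |η ω| := min_one_mul_le_max_one_mul_min_one c (abs_nonneg _)

lemma tendsto_probNorm_of_ae_tendsto {ξ : ℕ → Ω →ₘ[μ] ℝ}
    (h : ∀ᵐ ω ∂μ, Tendsto (fun k => ξ k ω) atTop (𝓝 0)) :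
    Tendsto (fun k => probNorm μ (ξ k)) atTop (𝓝 0) := by
  have := tendsto_integral_of_dominated_convergence (μ := μ)
      (F := fun k ω => min 1 |ξ k ω|) (f := fun _ => (0:ℝ)) (fun _ => (1:ℝ))
      (fun k => (integrable_min_one_abs (ξ k)).aestronglyMeasurable)
      (integrable_const 1)
      (fun k => ae_of_all _ fun ω => by
        simp [abs_of_nonneg (le_min zero_le_one (abs_nonneg (ξ k ω)))])
      (h.mono fun ω hω => by
        simpa [Function.comp_def] using
          ((continuous_const.min continuous_abs).tendsto' 0 (min 1 |0|) rfl).comp hω)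
  simpa only [probNorm_apply, min_eq_right, abs_zero, zero_le_one, integral_zero] using this

end ProbNorm

lemma AEEqFun.abs_one : |(1 : Ω →ₘ[μ] ℝ)| = 1 := by
  refine AEEqFun.ext ?_
  filter_upwards [AEEqFun.coeFn_abs (1 : Ω →ₘ[μ] ℝ), AEEqFun.coeFn_one (β := ℝ) (μ := μ)]
    with ω habs hone
  simp [habs, hone]

def truncAt (k : ℕ) (ξ : Ω →ₘ[μ] ℝ) : Ω →ₘ[μ] ℝ :=
  ξ.comp (fun t => max (-(k : ℝ)) (min (k : ℝ) t)) (by fun_prop)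

lemma coeFn_truncAt (k : ℕ) (ξ : Ω →ₘ[μ] ℝ) :
    truncAt k ξ =ᵐ[μ] fun ω => max (-(k : ℝ)) (min (k : ℝ) (ξ ω)) :=
  AEEqFun.coeFn_comp _ _ ξ

lemma truncAt_mem_Linf (k : ℕ) (ξ : Ω →ₘ[μ] ℝ) : truncAt k ξ ∈ Linf μ := by
  refine ⟨k, ?_⟩
  filter_upwards [coeFn_truncAt k ξ] with ω hω
  rw [hω, abs_le]
  exact ⟨le_max_left _ _, max_le (neg_le_self k.cast_nonneg) (min_le_left _ _)⟩

lemma ae_eventually_truncAt_eq (ξ : Ω →ₘ[μ] ℝ) :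
    ∀ᵐ ω ∂μ, ∀ᶠ k in atTop, truncAt k ξ ω = ξ ω := by
  filter_upwards [ae_all_iff.2 fun k => coeFn_truncAt k ξ] with ω hω
  filter_upwards [eventually_ge_atTop ⌈|ξ ω|⌉₊] with k hk
  have hξk := abs_le.1 ((Nat.le_ceil _).trans (Nat.cast_le.2 hk))
  rw [hω k, min_eq_right hξk.2, max_eq_right hξk.1]

namespace RNMod

variable (S : RNMod Ω μ)

lemma rnorm_zero : S.rnorm 0 = 0 := (S.isRNNorm.eq_zero_iff 0).2 rfl

lemma rnorm_neg (x : S.carrier) : S.rnorm (-x) = S.rnorm x := by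
  rw [← neg_one_smul (Ω →ₘ[μ] ℝ) x, S.isRNNorm.norm_smul, abs_neg, AEEqFun.abs_one, one_mul]

variable [IsFiniteMeasure μ]

def addGroupNorm : AddGroupNorm S.carrier where
  toFun x := probNorm μ (S.rnorm x)
  map_zero' := by rw [rnorm_zero, map_zero]
  add_le' x y := (probNorm_le_of_nonneg_of_le (S.isRNNorm.nonneg _)
    (S.isRNNorm.norm_add_le x y)).trans (map_add_le_add _ _ _)
  neg' x := by rw [rnorm_neg]
  eq_zero_of_map_eq_zero' x h := (S.isRNNorm.eq_zero_iff x).1 (eq_zero_of_map_eq_zero _ h)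

instance : NormedAddCommGroup S.carrier := S.addGroupNorm.toNormedAddCommGroup

lemma norm_def (x : S.carrier) : ‖x‖ = probNorm μ (S.rnorm x) := rfl

lemma dist_eq (x y : S.carrier) : S.dist x y = Dist.dist x y := by
  rw [dist_eq_norm]
  rfl

lemma completeSpace_of_complete (hS : S.Complete) : CompleteSpace S.carrier := by
  refine Metric.complete_of_cauchySeq_tendsto fun x hx => ?_
  obtain ⟨y, hy⟩ := hS x fun ε hε => by simpa only [dist_eq] using Metric.cauchySeq_iff.1 hx ε hε
  exact ⟨y, tendsto_iff_dist_tendsto_zero.2 (by simpa only [dTendsto, dist_eq] using hy)⟩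

lemma lipschitzWith_rnorm : LipschitzWith 1 S.rnorm := by
  refine LipschitzWith.mk_one fun x y => ?_
  rw [dist_eq_norm, dist_eq_norm, norm_eq_probNorm, norm_def]
  refine probNorm_le_of_ae_abs_le ?_
  have hx := S.isRNNorm.norm_add_le (x - y) y
  have hy := S.isRNNorm.norm_add_le (y - x) x
  rw [sub_add_cancel] at hx
  rw [sub_add_cancel, ← neg_sub, rnorm_neg] at hy
  filter_upwards [AEEqFun.coeFn_le.2 hx, AEEqFun.coeFn_le.2 hy,
    AEEqFun.coeFn_add (S.rnorm (x - y)) (S.rnorm y),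
    AEEqFun.coeFn_add (S.rnorm (x - y)) (S.rnorm x),
    AEEqFun.coeFn_sub (S.rnorm x) (S.rnorm y)] with ω hxω hyω haddy haddx hsub
  rw [haddy, Pi.add_apply] at hxω
  rw [haddx, Pi.add_apply] at hyω
  rw [hsub, Pi.sub_apply, abs_sub_le_iff]
  have := le_abs_self (S.rnorm (x - y) ω)
  exact ⟨by linarith, by linarith⟩

lemma continuous_smul_of_mem_Linf {ξ : Ω →ₘ[μ] ℝ} (hξ : ξ ∈ Linf μ) :
    Continuous fun x : S.carrier => ξ • x := by
  obtain ⟨c, hc⟩ := hξ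
  refine AddMonoidHomClass.continuous_of_bound (DistribSMul.toAddMonoidHom S.carrier ξ) (max 1 c)
    fun x => ?_
  rw [DistribSMul.toAddMonoidHom_apply, norm_def, norm_def, S.isRNNorm.norm_smul]
  refine probNorm_le_max_one_mul ?_
  filter_upwards [hc, AEEqFun.coeFn_mul |ξ| (S.rnorm x), AEEqFun.coeFn_abs ξ] with ω hcω hmul habs
  rw [hmul, Pi.mul_apply, habs, abs_mul, abs_abs]
  exact mul_le_mul_of_nonneg_right hcω (abs_nonneg _)

lemma tendsto_truncAt_smul (ξ : Ω →ₘ[μ] ℝ) (x : S.carrier) :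
    Tendsto (fun k => truncAt k ξ • x) atTop (𝓝 (ξ • x)) := by
  rw [tendsto_iff_norm_sub_tendsto_zero]
  simp_rw [← sub_smul, norm_def, S.isRNNorm.norm_smul]
  refine tendsto_probNorm_of_ae_tendsto ?_
  have hcoe : ∀ᵐ ω ∂μ, ∀ k : ℕ,
      (|truncAt k ξ - ξ| * S.rnorm x) ω = |truncAt k ξ ω - ξ ω| * S.rnorm x ω :=
    ae_all_iff.2 fun k => by
      filter_upwards [AEEqFun.coeFn_mul |truncAt k ξ - ξ| (S.rnorm x),
        AEEqFun.coeFn_abs (truncAt k ξ - ξ), AEEqFun.coeFn_sub (truncAt k ξ) ξ]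
        with ω hmul habs hsub
      rw [hmul, Pi.mul_apply, habs, hsub, Pi.sub_apply]
  filter_upwards [hcoe, ae_eventually_truncAt_eq ξ] with ω hcoeω htrunc
  refine tendsto_const_nhds.congr' ?_
  filter_upwards [htrunc] with k hk
  rw [hcoeω k, hk, sub_self, abs_zero, zero_mul]

end RNMod

namespace IsL0Extension

variable {E : Type} [AddCommGroup E] [Module (Linf μ) E] {n : E → Ω →ₘ[μ] ℝ}
  {S S₁ S₂ : RNMod Ω μ} {T : E → S.carrier} {T₁ : E → S₁.carrier} {T₂ : E → S₂.carrier}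

lemma map_add (h : IsL0Extension μ n S T) (a b : E) : T (a + b) = T a + T b := h.2.1.1 a b

lemma map_sub (h : IsL0Extension μ n S T) (a b : E) : T (a - b) = T a - T b :=
  (AddMonoidHom.mk' T h.map_add).map_sub a b

lemma map_smul (h : IsL0Extension μ n S T) (ξ : Linf μ) (a : E) :
    T (ξ • a) = (ξ : Ω →ₘ[μ] ℝ) • T a :=
  h.2.1.2 ξ a

lemma rnorm_map (h : IsL0Extension μ n S T) (a : E) : S.rnorm (T a) = n a := h.2.2.1 a

variable [IsFiniteMeasure μ]

lemma dist_map (h : IsL0Extension μ n S T) (a b : E) :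
    dist (T a) (T b) = probNorm μ (n (a - b)) := by
  rw [dist_eq_norm, ← h.map_sub, RNMod.norm_def, h.rnorm_map]

lemma denseRange (h : IsL0Extension μ n S T) : DenseRange T :=
  Metric.denseRange_iff.2 fun y ε hε => by
    obtain ⟨a, ha⟩ := h.2.2.2 y ε hε
    exact ⟨a, by rwa [dist_comm, ← RNMod.dist_eq]⟩

def toAbstractCompletion [PseudoMetricSpace E] (h : IsL0Extension μ n S T) (hT : Isometry T) :
    AbstractCompletion E where
  space := S.carrier
  coe := T
  uniformStruct := inferInstance
  complete := S.completeSpace_of_complete h.1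
  separation := inferInstance
  isUniformInducing := hT.isUniformInducing
  dense := h.denseRange

variable {U : S₁.carrier → S₂.carrier}

theorem map_add_of_comp (h₁ : IsL0Extension μ n S₁ T₁) (h₂ : IsL0Extension μ n S₂ T₂)
    (hU : Continuous U) (hUT : ∀ a, U (T₁ a) = T₂ a) (z w : S₁.carrier) :
    U (z + w) = U z + U w := by
  refine h₁.denseRange.induction_on₂ (p := fun z w => U (z + w) = U z + U w)
    (isClosed_eq (hU.comp continuous_add) ((hU.comp continuous_fst).add (hU.comp continuous_snd)))
    (fun a b => ?_) z w
  rw [← h₁.map_add, hUT, hUT, hUT, h₂.map_add]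

theorem map_smul_of_comp_of_mem_Linf (h₁ : IsL0Extension μ n S₁ T₁)
    (h₂ : IsL0Extension μ n S₂ T₂) (hU : Continuous U) (hUT : ∀ a, U (T₁ a) = T₂ a)
    {ξ : Ω →ₘ[μ] ℝ} (hξ : ξ ∈ Linf μ) (z : S₁.carrier) : U (ξ • z) = ξ • U z := by
  refine h₁.denseRange.induction_on (p := fun z => U (ξ • z) = ξ • U z) z
    (isClosed_eq (hU.comp (S₁.continuous_smul_of_mem_Linf hξ))
      ((S₂.continuous_smul_of_mem_Linf hξ).comp hU)) fun a => ?_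
  rw [← h₁.map_smul ⟨ξ, hξ⟩, hUT, hUT, h₂.map_smul]

theorem map_smul_of_comp (h₁ : IsL0Extension μ n S₁ T₁) (h₂ : IsL0Extension μ n S₂ T₂)
    (hU : Continuous U) (hUT : ∀ a, U (T₁ a) = T₂ a) (ξ : Ω →ₘ[μ] ℝ) (z : S₁.carrier) :
    U (ξ • z) = ξ • U z := by
  refine tendsto_nhds_unique ((hU.tendsto _).comp (S₁.tendsto_truncAt_smul ξ z)) ?_
  refine (S₂.tendsto_truncAt_smul ξ (U z)).congr fun k => ?_
  exact (h₁.map_smul_of_comp_of_mem_Linf h₂ hU hUT (truncAt_mem_Linf k ξ) z).symm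

theorem rnorm_map_of_comp (h₁ : IsL0Extension μ n S₁ T₁) (h₂ : IsL0Extension μ n S₂ T₂)
    (hU : Continuous U) (hUT : ∀ a, U (T₁ a) = T₂ a) (z : S₁.carrier) :
    S₂.rnorm (U z) = S₁.rnorm z := by
  refine h₁.denseRange.induction_on (p := fun z => S₂.rnorm (U z) = S₁.rnorm z) z
    (isClosed_eq (S₂.lipschitzWith_rnorm.continuous.comp hU) S₁.lipschitzWith_rnorm.continuous)
    fun a => ?_
  rw [hUT, h₂.rnorm_map, h₁.rnorm_map]

end IsL0Extension

theorem L0_extension_unique_general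
    {Ω : Type} [MeasurableSpace Ω] (μ : Measure Ω) [IsProbabilityMeasure μ]
    {E : Type} [AddCommGroup E] [Module (Linf μ) E]
    (n : E → Ω →ₘ[μ] ℝ)
    (S₁ S₂ : RNMod Ω μ) (T₁ : E → S₁.carrier) (T₂ : E → S₂.carrier)
    (h₁ : IsL0Extension μ n S₁ T₁) (h₂ : IsL0Extension μ n S₂ T₂) :
    ∃ U : S₁.carrier → S₂.carrier,
      Function.Bijective U ∧
      (∀ x y, U (x + y) = U x + U y) ∧
      (∀ (ξ : Ω →ₘ[μ] ℝ) (x : S₁.carrier), U (ξ • x) = ξ • U x) ∧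
      (∀ x, S₂.rnorm (U x) = S₁.rnorm x) := by
  let _ : PseudoMetricSpace E := PseudoMetricSpace.induced T₁ inferInstance
  have hT₂ : Isometry T₂ := Isometry.of_dist_eq fun a b => by
    rw [h₂.dist_map, ← h₁.dist_map]
    rfl
  let U : S₁.carrier ≃ᵤ S₂.carrier :=
    (h₁.toAbstractCompletion (Isometry.of_dist_eq fun _ _ => rfl)).compareEquiv
      (h₂.toAbstractCompletion hT₂)
  have hUT : ∀ a, U (T₁ a) = T₂ a := AbstractCompletion.compare_coe _ _
  exact ⟨U, U.bijective, h₁.map_add_of_comp h₂ U.continuous hUT,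
    h₁.map_smul_of_comp h₂ U.continuous hUT, h₁.rnorm_map_of_comp h₂ U.continuous hUT⟩

/-- the `L⁰`-extension of an `L^∞`-normed module is unique up to
isometric `L⁰`-module isomorphism. -/
theorem L0_extension_unique
    {Ω : Type} [MeasurableSpace Ω] (μ : Measure Ω) [IsProbabilityMeasure μ]
    {E : Type} [AddCommGroup E] [Module (Linf μ) E]
    (n : E → Ω →ₘ[μ] ℝ) (hn : IsLinfNorm μ n)
    (S₁ S₂ : RNMod Ω μ) (T₁ : E → S₁.carrier) (T₂ : E → S₂.carrier)
    (h₁ : IsL0Extension μ n S₁ T₁) (h₂ : IsL0Extension μ n S₂ T₂) :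
    ∃ U : S₁.carrier → S₂.carrier,
      Function.Bijective U ∧
      (∀ x y, U (x + y) = U x + U y) ∧
      (∀ (ξ : Ω →ₘ[μ] ℝ) (x : S₁.carrier), U (ξ • x) = ξ • U x) ∧
      (∀ x, S₂.rnorm (U x) = S₁.rnorm x) :=
  L0_extension_unique_general μ n S₁ S₂ T₁ T₂ h₁ h₂

end
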